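/- arXiv:1811.05831 — 4 statements merged into one kernel-verified Lean document; each statement's English description precedes it below -/
import Mathlib

section
/- Let E be a real inner product space, Ω ⊆ E a convex set, and f : E → ℝ convex, differentiable with gradient ∇f, and L-smooth (L ≥ 0). Let γ ∈ [0,1], let w, v ∈ Ω, set z = (1−γ)w + γv, let v' ∈ Ω satisfy ⟨∇f(z), v'⟩ ≤ ⟨∇f(z), u⟩ for all u ∈ Ω, and set w' = (1−γ)w + γv'. Then for every w* ∈ Ω, f(w') ≤ (1−γ)·f(w) + γ·f(w*) + (Lγ²/2)·‖v' − v‖². -/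
open RealInnerProductSpace

/-! The smoothness upper bound at `z` gives
`f(w') ≤ f(z) + γ⟪∇f(z), v' − v⟫ + (Lγ²/2)‖v' − v‖²`, since `w' − z = γ(v' − v)`. The oracle
replaces `v'` by `w*` in the inner product, and because `z + γ(w* − v) = (1 − γ)w + γw*`, the
resulting affine expression is the convex combination of the tangent plane of `f` at `z`
evaluated at `w` and at `w*`, which convexity bounds by `(1 − γ)f(w) + γf(w*)`. -/

theorem ConvexOn.add_fderiv_sub_le {E : Type*} [NormedAddCommGroup E] [NormedSpace ℝ E]
    {s : Set E} {f : E → ℝ} {f' : E →L[ℝ] ℝ} {x y : E} (hf : ConvexOn ℝ s f)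
    (hx : x ∈ s) (hy : y ∈ s) (hdiff : HasFDerivAt f f' y) :
    f y + f' (x - y) ≤ f x := by
  let g : ℝ →ᵃ[ℝ] E := AffineMap.lineMap y x
  have hmaps : Set.MapsTo g (Set.Icc 0 1) s := by
    simpa only [g, Set.mapsTo_iff_image_subset, ← segment_eq_image_lineMap]
      using hf.1.segment_subset hy hx
  have hconv : ConvexOn ℝ (Set.Icc 0 1) (f ∘ g) :=
    (hf.comp_affineMap g).subset hmaps (convex_Icc 0 1)
  have hderiv : HasDerivAt (f ∘ g) (f' (x - y)) 0 := by
    have hg0 : g 0 = y := AffineMap.lineMap_apply_zero y x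
    exact (hg0 ▸ hdiff).comp_hasDerivAt (0 : ℝ) AffineMap.hasDerivAt_lineMap
  have hslope := hconv.le_slope_of_hasDerivAt (by simp) (by simp) zero_lt_one hderiv
  simp only [slope_def_field, Function.comp_apply, g, AffineMap.lineMap_apply_zero,
    AffineMap.lineMap_apply_one, sub_zero, div_one] at hslope
  linarith

theorem primal_averaging_one_step_recursion_general
    {E : Type*} [NormedAddCommGroup E] [InnerProductSpace ℝ E]
    {Ω : Set E}
    (f : E → ℝ) (f' : E → E) {L : ℝ}
    (hconv : ConvexOn ℝ Set.univ f)
    (hdiff : ∀ x : E, HasFDerivAt f (innerSL ℝ (f' x)) x)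
    (hsmooth : ∀ x y : E, |f x - f y - ⟪f' y, x - y⟫| ≤ L / 2 * ‖x - y‖ ^ 2)
    {γ : ℝ} (hγ : γ ∈ Set.Icc (0 : ℝ) 1)
    {w v : E} (z : E) (hz : z = (1 - γ) • w + γ • v)
    {v' : E}
    (horacle : ∀ u ∈ Ω, ⟪f' z, v'⟫ ≤ ⟪f' z, u⟫)
    (w' : E) (hw' : w' = (1 - γ) • w + γ • v') :
    ∀ wstar ∈ Ω,
      f w' ≤ (1 - γ) * f w + γ * f wstar + L * γ ^ 2 / 2 * ‖v' - v‖ ^ 2 := by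
  intro wstar hwstar
  obtain ⟨hγ0, hγ1⟩ := hγ
  have htangent (u : E) : f z + ⟪f' z, u - z⟫ ≤ f u :=
    hconv.add_fderiv_sub_le (Set.mem_univ u) (Set.mem_univ z) (hdiff z)
  have hstep : w' - z = γ • (v' - v) := by rw [hw', hz]; module
  have hcomb : γ * ⟪f' z, wstar - v⟫ = (1 - γ) * ⟪f' z, w - z⟫ + γ * ⟪f' z, wstar - z⟫ := by
    simp only [hz, inner_sub_right, inner_add_right, real_inner_smul_right]; ring
  calc f w' ≤ f z + ⟪f' z, w' - z⟫ + L / 2 * ‖w' - z‖ ^ 2 := by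
        linarith [(abs_le.1 (hsmooth w' z)).2]
    _ = f z + γ * ⟪f' z, v' - v⟫ + L * γ ^ 2 / 2 * ‖v' - v‖ ^ 2 := by
        rw [hstep, real_inner_smul_right, norm_smul, mul_pow, Real.norm_eq_abs, sq_abs]; ring
    _ ≤ f z + γ * ⟪f' z, wstar - v⟫ + L * γ ^ 2 / 2 * ‖v' - v‖ ^ 2 := by
        simp only [inner_sub_right]; gcongr; exact horacle wstar hwstar
    _ = (1 - γ) * (f z + ⟪f' z, w - z⟫) + γ * (f z + ⟪f' z, wstar - z⟫)
          + L * γ ^ 2 / 2 * ‖v' - v‖ ^ 2 := by rw [hcomb]; ring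
    _ ≤ (1 - γ) * f w + γ * f wstar + L * γ ^ 2 / 2 * ‖v' - v‖ ^ 2 := by
        have h1γ : 0 ≤ 1 - γ := sub_nonneg.2 hγ1
        gcongr
        exacts [htangent w, htangent wstar]

/-- Per-iteration recursion of Primal Averaging with option (B): with `z = (1−γ)w + γv`,
`v'` the output of the linear oracle in direction `∇f(z)`, and `w' = (1−γ)w + γv'`,
for every `w* ∈ Ω`, `f(w') ≤ (1−γ)f(w) + γf(w*) + (Lγ²/2)‖v' − v‖²`. -/
theorem primal_averaging_one_step_recursion
    {E : Type*} [NormedAddCommGroup E] [InnerProductSpace ℝ E]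
    {Ω : Set E} (hΩ : Convex ℝ Ω)
    (f : E → ℝ) (f' : E → E) {L : ℝ} (hL : 0 ≤ L)
    (hconv : ConvexOn ℝ Set.univ f)
    (hdiff : ∀ x : E, HasFDerivAt f (innerSL ℝ (f' x)) x)
    (hsmooth : ∀ x y : E, |f x - f y - ⟪f' y, x - y⟫| ≤ L / 2 * ‖x - y‖ ^ 2)
    {γ : ℝ} (hγ : γ ∈ Set.Icc (0 : ℝ) 1)
    {w v : E} (hw : w ∈ Ω) (hv : v ∈ Ω) (z : E) (hz : z = (1 - γ) • w + γ • v)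
    {v' : E} (hv' : v' ∈ Ω)
    (horacle : ∀ u ∈ Ω, ⟪f' z, v'⟫ ≤ ⟪f' z, u⟫)
    (w' : E) (hw' : w' = (1 - γ) • w + γ • v') :
    ∀ wstar ∈ Ω,
      f w' ≤ (1 - γ) * f w + γ * f wstar + L * γ ^ 2 / 2 * ‖v' - v‖ ^ 2 :=
  primal_averaging_one_step_recursion_general f f' hconv hdiff hsmooth hγ z hz horacle w' hw'
end

section
/- Let E be a real inner product space, α > 0, and let Ω ⊆ E be a nonempty compact α-strongly convex set of diameter at most D (i.e., ‖u − v‖ ≤ D for all u, v ∈ Ω). Let f : E → ℝ be convex, differentiable with gradient ∇f, and L-smooth (L > 0). Define the Primal Averaging iterates with option (B): w_0 = v_0 ∈ Ω; for t ≥ 1, γ_t = 2/(t+1), z_{t−1} = (1−γ_t)w_{t−1} + γ_t v_{t−1}, v_t ∈ Ω with ⟨∇f(z_{t−1}), v_t⟩ ≤ ⟨∇f(z_{t−1}), u⟩ for all u ∈ Ω, and w_t = (1−γ_t)w_{t−1} + γ_t v_t. If there is c > 0 with ‖∇f(z_t)‖ ≥ c for all t ≥ 0, then for every w* ∈ Ω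 and every t ≥ 1, f(w_t) − f(w*) ≤ (2L/(t(t+1)))·D²·( 1 + 36L²/(α²c²) ). -/
/-!
For `h_t = f(w_t) - f(w*)`, convexity and `L`-smoothness give the one-step bound
`h_{t+1} ≤ (1 - γ_{t+1}) h_t + (L/2) γ_{t+1}² ‖v_{t+1} - v_t‖²`; multiplied by `(t+1)(t+2)` it
telescopes to `t(t+1) h_t ≤ 2L ∑_{s<t} ‖v_{s+1} - v_s‖²`. On an `α`-strongly convex set the
minimiser of a linear form `⟪g, ·⟫` moves Lipschitz-continuously with `g` as long as `‖g‖ ≥ c`: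
`αc ‖v_{s+2} - v_{s+1}‖ ≤ ‖∇f(z_{s+1}) - ∇f(z_s)‖ ≤ L ‖z_{s+1} - z_s‖ ≤ 6LD/(s+2)`.
Hence the sum of squares is at most `D² + (6LD/(αc))² ∑ 1/(s+2)² ≤ D²(1 + 36L²/(α²c²))`.
The first-order inequality `f x + ⟪∇f x, u - x⟫ ≤ f u` comes from convexity along a chord and the
quadratic lower bound, letting the chord parameter tend to `0`; co-coercivity then makes `∇f`
`L`-Lipschitz.
-/

open RealInnerProductSpace Filter Topology

def StronglyConvexSet {E : Type*} [NormedAddCommGroup E] [InnerProductSpace ℝ E]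
    (α : ℝ) (Ω : Set E) : Prop :=
  ∀ u ∈ Ω, ∀ v ∈ Ω, ∀ θ : ℝ, θ ∈ Set.Icc (0 : ℝ) 1 → ∀ y : E,
    ‖y - (θ • u + (1 - θ) • v)‖ ≤ θ * (1 - θ) * (α / 2) * ‖u - v‖ ^ 2 → y ∈ Ω

lemma le_of_forall_mem_Ioc_le_add_mul {a b c : ℝ}
    (h : ∀ θ ∈ Set.Ioc (0 : ℝ) 1, a ≤ b + θ * c) : a ≤ b := by
  have hlim : Tendsto (fun θ : ℝ => b + θ * c) (𝓝[>] 0) (𝓝 b) :=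
    (Continuous.tendsto' (by fun_prop) 0 b (by simp)).mono_left nhdsWithin_le_nhds
  exact ge_of_tendsto hlim (eventually_of_mem (Ioc_mem_nhdsGT one_pos) h)

section SmoothConvex

variable {E : Type*} [NormedAddCommGroup E] [InnerProductSpace ℝ E] {f : E → ℝ} {f' : E → E}
  {L : ℝ}

lemma ConvexOn.add_inner_le (hconv : ConvexOn ℝ Set.univ f)
    (hsmooth : ∀ x y : E, |f x - f y - ⟪f' y, x - y⟫| ≤ L / 2 * ‖x - y‖ ^ 2) (x u : E) :
    f x + ⟪f' x, u - x⟫ ≤ f u := by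
  refine le_of_forall_mem_Ioc_le_add_mul (c := L / 2 * ‖u - x‖ ^ 2) fun θ ⟨hθ0, hθ1⟩ => ?_
  have hchord : f (x + θ • (u - x)) ≤ (1 - θ) * f x + θ * f u := by
    have := hconv.2 (Set.mem_univ x) (Set.mem_univ u) (sub_nonneg.2 hθ1) hθ0.le (sub_add_cancel 1 θ)
    rwa [show x + θ • (u - x) = (1 - θ) • x + θ • u by module]
  have htangent := neg_le_of_abs_le (hsmooth (x + θ • (u - x)) x)
  rw [add_sub_cancel_left, real_inner_smul_right, norm_smul, Real.norm_eq_abs, abs_of_pos hθ0,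
    mul_pow] at htangent
  have : θ * (f x + ⟪f' x, u - x⟫) ≤ θ * (f u + θ * (L / 2 * ‖u - x‖ ^ 2)) := by
    linarith
  exact le_of_mul_le_mul_left this hθ0

lemma ConvexOn.add_inner_add_norm_sq_le (hL : 0 < L) (hconv : ConvexOn ℝ Set.univ f)
    (hsmooth : ∀ x y : E, |f x - f y - ⟪f' y, x - y⟫| ≤ L / 2 * ‖x - y‖ ^ 2) (x y : E) :
    f x + ⟪f' x, y - x⟫ + (2 * L)⁻¹ * ‖f' y - f' x‖ ^ 2 ≤ f y := by
  set g := f' y - f' x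
  have hlow := hconv.add_inner_le hsmooth x (y - L⁻¹ • g)
  have hup := le_of_abs_le (hsmooth (y - L⁻¹ • g) y)
  rw [sub_right_comm, inner_sub_right, real_inner_smul_right] at hlow
  rw [sub_sub_cancel_left, inner_neg_right, real_inner_smul_right, norm_neg, norm_smul,
    Real.norm_eq_abs, abs_of_pos (inv_pos.2 hL)] at hup
  have hg : L⁻¹ * ⟪f' y, g⟫ - L⁻¹ * ⟪f' x, g⟫ = L⁻¹ * ‖g‖ ^ 2 := by
    rw [← mul_sub, ← inner_sub_left, real_inner_self_eq_norm_sq]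
  have hcoef : L / 2 * (L⁻¹ * ‖g‖) ^ 2 = L⁻¹ * ‖g‖ ^ 2 - (2 * L)⁻¹ * ‖g‖ ^ 2 := by
    field_simp; ring
  linarith

lemma ConvexOn.norm_sub_le_of_smooth (hL : 0 < L) (hconv : ConvexOn ℝ Set.univ f)
    (hsmooth : ∀ x y : E, |f x - f y - ⟪f' y, x - y⟫| ≤ L / 2 * ‖x - y‖ ^ 2) (x y : E) :
    ‖f' x - f' y‖ ≤ L * ‖x - y‖ := by
  have hxy := hconv.add_inner_add_norm_sq_le hL hsmooth x y
  have hyx := hconv.add_inner_add_norm_sq_le hL hsmooth y x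
  rw [norm_sub_rev] at hxy
  have hcs : ⟪f' x - f' y, x - y⟫ ≤ ‖f' x - f' y‖ * ‖x - y‖ := real_inner_le_norm _ _
  have hsum : ⟪f' x - f' y, x - y⟫ = -(⟪f' x, y - x⟫ + ⟪f' y, x - y⟫) := by
    rw [inner_sub_left, ← neg_sub x y, inner_neg_right]; ring
  have hinv : (2 * L)⁻¹ * ‖f' x - f' y‖ ^ 2 + (2 * L)⁻¹ * ‖f' x - f' y‖ ^ 2
      = L⁻¹ * ‖f' x - f' y‖ ^ 2 := by field_simp; ring
  have hsq : ‖f' x - f' y‖ ^ 2 ≤ L * (‖f' x - f' y‖ * ‖x - y‖) := by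
    rw [← inv_mul_le_iff₀ hL]; linarith
  nlinarith [norm_nonneg (f' x - f' y), mul_nonneg hL.le (norm_nonneg (x - y))]

lemma ConvexOn.sub_le_of_averaging_step (hconv : ConvexOn ℝ Set.univ f)
    (hsmooth : ∀ x y : E, |f x - f y - ⟪f' y, x - y⟫| ≤ L / 2 * ‖x - y‖ ^ 2) {γ : ℝ}
    (hγ0 : 0 ≤ γ) (hγ1 : γ ≤ 1) {x v v' u : E}
    (hv' : ⟪f' ((1 - γ) • x + γ • v), v'⟫ ≤ ⟪f' ((1 - γ) • x + γ • v), u⟫) :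
    f ((1 - γ) • x + γ • v') - f u ≤ (1 - γ) * (f x - f u) + L / 2 * γ ^ 2 * ‖v' - v‖ ^ 2 := by
  set z := (1 - γ) • x + γ • v
  set x' := (1 - γ) • x + γ • v'
  have hup := le_of_abs_le (hsmooth x' z)
  have hdiff : x' - z = γ • (v' - v) := by simp only [x', z]; module
  have hsplit : x' - z = (1 - γ) • (x - z) + γ • (v' - z) := by simp only [x']; module
  rw [hdiff, norm_smul, Real.norm_eq_abs, abs_of_nonneg hγ0, mul_pow] at hup
  rw [← hdiff, hsplit, inner_add_right, real_inner_smul_right, real_inner_smul_right] at hup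
  have hx := hconv.add_inner_le hsmooth z x
  have hu := hconv.add_inner_le hsmooth z u
  have hv'u : ⟪f' z, v' - z⟫ ≤ ⟪f' z, u - z⟫ := by
    rw [inner_sub_right, inner_sub_right]; linarith
  have := mul_le_mul_of_nonneg_left hx (sub_nonneg.2 hγ1)
  have := mul_le_mul_of_nonneg_left (hv'u.trans (le_sub_iff_add_le'.2 hu)) hγ0
  linarith

end SmoothConvex

namespace StronglyConvexSet

variable {E : Type*} [NormedAddCommGroup E] [InnerProductSpace ℝ E] {α : ℝ} {Ω : Set E}

lemma convex (hα : 0 ≤ α) (hΩ : StronglyConvexSet α Ω) : Convex ℝ Ω := by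
  intro u hu v hv a b ha hb hab
  obtain rfl : b = 1 - a := by linarith
  refine hΩ u hu v hv a ⟨ha, by linarith⟩ _ ?_
  simp only [sub_self, norm_zero]
  positivity

lemma mul_norm_sq_le_inner_sub (hα : 0 ≤ α) (hΩ : StronglyConvexSet α Ω) {g v : E} (hv : v ∈ Ω)
    (hmin : IsMinOn (fun u => ⟪g, u⟫) Ω v) {u : E} (hu : u ∈ Ω) :
    α / 2 * ‖g‖ * ‖u - v‖ ^ 2 ≤ ⟪g, u - v⟫ := by
  rcases eq_or_ne g 0 with rfl | hg
  · simp
  have hg' : 0 < ‖g‖ := norm_pos_iff.2 hg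
  refine le_of_forall_mem_Ioc_le_add_mul (c := α / 2 * ‖g‖ * ‖u - v‖ ^ 2)
    fun θ ⟨hθ0, hθ1⟩ => ?_
  set r := θ * (1 - θ) * (α / 2) * ‖u - v‖ ^ 2
  have hr : 0 ≤ r := by have : 0 ≤ 1 - θ := sub_nonneg.2 hθ1; positivity
  -- push the chord point `θu + (1-θ)v` a distance `r` in the direction `-g`
  have hmem : θ • u + (1 - θ) • v - (r / ‖g‖) • g ∈ Ω := by
    refine hΩ u hu v hv θ ⟨hθ0.le, hθ1⟩ _ ?_
    rw [sub_sub_cancel_left, norm_neg, norm_smul, Real.norm_eq_abs,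
      abs_of_nonneg (div_nonneg hr hg'.le), div_mul_cancel₀ _ hg'.ne']
  have hle := isMinOn_iff.1 hmin _ hmem
  simp only [inner_sub_right, inner_add_right, real_inner_smul_right,
    real_inner_self_eq_norm_sq] at hle
  have hrg : r / ‖g‖ * ‖g‖ ^ 2 = θ * ((1 - θ) * (α / 2 * ‖g‖ * ‖u - v‖ ^ 2)) := by
    simp only [r]; field_simp
  have : θ * ((1 - θ) * (α / 2 * ‖g‖ * ‖u - v‖ ^ 2)) ≤ θ * ⟪g, u - v⟫ := by
    rw [inner_sub_right]; linarith
  have := le_of_mul_le_mul_left this hθ0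
  linarith

lemma mul_norm_sub_le_norm_sub (hα : 0 ≤ α) (hΩ : StronglyConvexSet α Ω) {g₁ g₂ v₁ v₂ : E}
    (hv₁ : v₁ ∈ Ω) (hv₂ : v₂ ∈ Ω) (hmin₁ : IsMinOn (fun u => ⟪g₁, u⟫) Ω v₁)
    (hmin₂ : IsMinOn (fun u => ⟪g₂, u⟫) Ω v₂) :
    α / 2 * (‖g₁‖ + ‖g₂‖) * ‖v₁ - v₂‖ ≤ ‖g₁ - g₂‖ := by
  have h₁ := hΩ.mul_norm_sq_le_inner_sub hα hv₁ hmin₁ hv₂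
  have h₂ := hΩ.mul_norm_sq_le_inner_sub hα hv₂ hmin₂ hv₁
  rw [norm_sub_rev] at h₁
  have hcs : ⟪g₁ - g₂, v₂ - v₁⟫ ≤ ‖g₁ - g₂‖ * ‖v₁ - v₂‖ := by
    rw [norm_sub_rev v₁]; exact real_inner_le_norm _ _
  have hsum : ⟪g₁ - g₂, v₂ - v₁⟫ = ⟪g₁, v₂ - v₁⟫ + ⟪g₂, v₁ - v₂⟫ := by
    rw [inner_sub_left, ← neg_sub v₁ v₂, inner_neg_right, inner_neg_right]; ring
  have hsq : α / 2 * (‖g₁‖ + ‖g₂‖) * ‖v₁ - v₂‖ * ‖v₁ - v₂‖ ≤ ‖g₁ - g₂‖ * ‖v₁ - v₂‖ := by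
    linarith
  rcases (norm_nonneg (v₁ - v₂)).eq_or_lt with h | h
  · rw [← h, mul_zero]; exact norm_nonneg _
  · exact le_of_mul_le_mul_right hsq h

lemma mul_norm_sub_le_norm_sub_of_le_norm (hα : 0 ≤ α) (hΩ : StronglyConvexSet α Ω)
    {c : ℝ} {g₁ g₂ v₁ v₂ : E} (hc₁ : c ≤ ‖g₁‖) (hc₂ : c ≤ ‖g₂‖) (hv₁ : v₁ ∈ Ω) (hv₂ : v₂ ∈ Ω)
    (hmin₁ : IsMinOn (fun u => ⟪g₁, u⟫) Ω v₁) (hmin₂ : IsMinOn (fun u => ⟪g₂, u⟫) Ω v₂) :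
    α * c * ‖v₁ - v₂‖ ≤ ‖g₁ - g₂‖ := by
  have hαc : α * c ≤ α / 2 * (‖g₁‖ + ‖g₂‖) := by nlinarith
  exact (mul_le_mul_of_nonneg_right hαc (norm_nonneg _)).trans
    (hΩ.mul_norm_sub_le_norm_sub hα hv₁ hv₂ hmin₁ hmin₂)

end StronglyConvexSet

namespace PrimalAveraging

noncomputable def stepSize (t : ℕ) : ℝ := 2 / ((t : ℝ) + 1)

lemma stepSize_pos (t : ℕ) : 0 < stepSize t := by unfold stepSize; positivity

lemma stepSize_succ (n : ℕ) : stepSize (n + 1) = 2 / ((n : ℝ) + 2) := by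
  unfold stepSize; push_cast; ring

lemma stepSize_succ_le_one (n : ℕ) : stepSize (n + 1) ≤ 1 := by
  rw [stepSize_succ, div_le_one (by positivity)]; linarith [n.cast_nonneg (α := ℝ)]

lemma stepSize_antitone : Antitone stepSize := fun m n h => by
  unfold stepSize; gcongr

lemma sum_range_inv_add_two_sq_le (m : ℕ) :
    ∑ n ∈ Finset.range m, 1 / ((n : ℝ) + 2) ^ 2 ≤ 1 - 1 / ((m : ℝ) + 1) := by
  induction m with
  | zero => simp
  | succ m ih =>
    rw [Finset.sum_range_succ]
    have hm : (0 : ℝ) ≤ m := m.cast_nonneg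
    -- `1 / (m + 2)² ≤ 1 / ((m + 1)(m + 2)) = 1 / (m + 1) - 1 / (m + 2)`
    have : 1 / ((m : ℝ) + 2) ^ 2 ≤ 1 / ((m : ℝ) + 1) - 1 / ((m + 1 : ℕ) + 1) := by
      push_cast
      rw [div_sub_div _ _ (by positivity) (by positivity), div_le_div_iff₀ (by positivity)
        (by positivity)]
      nlinarith
    linarith

lemma mul_mul_le_of_step {e ρ : ℕ → ℝ} {L B M : ℝ} (hL : 0 ≤ L) (hρ : ∀ n, 0 ≤ ρ n)
    (hρ0 : ρ 0 ≤ B) (hρsucc : ∀ n, ρ (n + 1) ≤ M / ((n : ℝ) + 2) ^ 2)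
    (hstep : ∀ n, e (n + 1) ≤ (1 - stepSize (n + 1)) * e n + L / 2 * stepSize (n + 1) ^ 2 * ρ n)
    (t : ℕ) : (t : ℝ) * (t + 1) * e t ≤ 2 * L * (B + M) := by
  set S : ℕ → ℝ := fun n => n * (n + 1) * e n
  have hS : ∀ n, S (n + 1) - S n ≤ 2 * L * ρ n := by
    intro n
    have hn : (0 : ℝ) ≤ n := n.cast_nonneg
    have h := mul_le_mul_of_nonneg_left (hstep n) (by positivity : (0 : ℝ) ≤ (n + 1) * (n + 2))
    rw [stepSize_succ] at h
    have hid : ((n : ℝ) + 1) * (n + 2) * ((1 - 2 / ((n : ℝ) + 2)) * e n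
        + L / 2 * (2 / ((n : ℝ) + 2)) ^ 2 * ρ n)
        = S n + 2 * L * ρ n - 2 * L * ρ n / (n + 2) := by
      simp only [S]; field_simp; ring
    have : 0 ≤ 2 * L * ρ n / (n + 2) := by have := hρ n; positivity
    simp only [S] at hid ⊢
    push_cast
    linarith
  have htel : S t ≤ ∑ n ∈ Finset.range t, 2 * L * ρ n := by
    have := Finset.sum_le_sum fun n (_ : n ∈ Finset.range t) => hS n
    rwa [Finset.sum_range_sub S t, show S 0 = 0 by simp [S], sub_zero] at this
  have hM : 0 ≤ M := by
    have := (hρ 1).trans (hρsucc 0)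
    norm_num at this
    linarith
  have hsum : ∑ n ∈ Finset.range t, ρ n ≤ B + M := by
    rcases t with _ | m
    · simp only [Finset.range_zero, Finset.sum_empty]; linarith [hρ 0]
    rw [Finset.sum_range_succ']
    have := Finset.sum_le_sum fun n (_ : n ∈ Finset.range m) => hρsucc n
    have hinv := sum_range_inv_add_two_sq_le m
    have : ∑ n ∈ Finset.range m, M / ((n : ℝ) + 2) ^ 2 ≤ M := by
      simp only [div_eq_mul_one_div M, ← Finset.mul_sum]
      nlinarith [(by positivity : (0 : ℝ) ≤ 1 / ((m : ℝ) + 1))]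
    linarith
  calc (t : ℝ) * (t + 1) * e t = S t := rfl
    _ ≤ 2 * L * ∑ n ∈ Finset.range t, ρ n := by rwa [Finset.mul_sum]
    _ ≤ 2 * L * (B + M) := mul_le_mul_of_nonneg_left hsum (by positivity)

variable {E : Type*} [NormedAddCommGroup E] [InnerProductSpace ℝ E] {Ω : Set E} {w v z : ℕ → E}

lemma averaging_mem (hΩ : Convex ℝ Ω) (hv : ∀ n, v n ∈ Ω) (hw0 : w 0 = v 0)
    (hw : ∀ n, w (n + 1) = (1 - stepSize (n + 1)) • w n + stepSize (n + 1) • v (n + 1)) :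
    ∀ n, w n ∈ Ω
  | 0 => hw0 ▸ hv 0
  | n + 1 => hw n ▸ hΩ (averaging_mem hΩ hv hw0 hw n) (hv (n + 1))
      (sub_nonneg.2 (stepSize_succ_le_one n)) (stepSize_pos _).le (sub_add_cancel _ _)

lemma norm_succ_sub_le_of_averaging {D : ℝ} (hdiam : ∀ u ∈ Ω, ∀ v ∈ Ω, ‖u - v‖ ≤ D)
    (hv : ∀ n, v n ∈ Ω) (hwΩ : ∀ n, w n ∈ Ω)
    (hz : ∀ n, z n = (1 - stepSize (n + 1)) • w n + stepSize (n + 1) • v n)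
    (hw : ∀ n, w (n + 1) = (1 - stepSize (n + 1)) • w n + stepSize (n + 1) • v (n + 1))
    (n : ℕ) : ‖z (n + 1) - z n‖ ≤ 6 * D / ((n : ℝ) + 2) := by
  have hnorm : ∀ (k : ℕ) (x y : E), x ∈ Ω → y ∈ Ω → ‖stepSize k • (x - y)‖ ≤ stepSize k * D :=
    fun k x y hx hy => by
      rw [norm_smul, Real.norm_of_nonneg (stepSize_pos k).le]
      exact mul_le_mul_of_nonneg_left (hdiam x hx y hy) (stepSize_pos k).le
  have h₁ := hnorm (n + 2) _ _ (hv (n + 1)) (hwΩ (n + 1))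
  have h₂ := hnorm (n + 1) _ _ (hv (n + 1)) (hwΩ n)
  have h₃ := hnorm (n + 1) _ _ (hwΩ n) (hv n)
  have hγ : stepSize (n + 2) * D ≤ stepSize (n + 1) * D :=
    mul_le_mul_of_nonneg_right (stepSize_antitone (by omega))
      (by simpa using hdiam _ (hv 0) _ (hv 0))
  have hsplit : z (n + 1) - z n = stepSize (n + 2) • (v (n + 1) - w (n + 1))
      + stepSize (n + 1) • (v (n + 1) - w n) + stepSize (n + 1) • (w n - v n) := by
    rw [hz (n + 1), hw n, hz n]; module
  calc ‖z (n + 1) - z n‖ ≤ 3 * (stepSize (n + 1) * D) := by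
        rw [hsplit]; exact norm_add₃_le.trans (by linarith)
    _ = 6 * D / ((n : ℝ) + 2) := by rw [stepSize_succ]; ring

end PrimalAveraging

open PrimalAveraging in
theorem primal_averaging_optionB_O_inv_t_sq_general
    {E : Type*} [NormedAddCommGroup E] [InnerProductSpace ℝ E]
    {α : ℝ} (hα : 0 < α) {Ω : Set E}
    (hΩ : StronglyConvexSet α Ω)
    {D : ℝ} (hdiam : ∀ u ∈ Ω, ∀ v ∈ Ω, ‖u - v‖ ≤ D)
    (f : E → ℝ) (f' : E → E) {L : ℝ} (hL : 0 < L)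
    (hconv : ConvexOn ℝ Set.univ f)
    (hsmooth : ∀ x y : E, |f x - f y - ⟪f' y, x - y⟫| ≤ L / 2 * ‖x - y‖ ^ 2)
    (w v z : ℕ → E)
    (hw0 : w 0 = v 0) (hv0 : v 0 ∈ Ω)
    (hz : ∀ t : ℕ, 1 ≤ t →
      z (t - 1) = (1 - 2 / ((t : ℝ) + 1)) • w (t - 1) + (2 / ((t : ℝ) + 1)) • v (t - 1))
    (hvmem : ∀ t : ℕ, 1 ≤ t → v t ∈ Ω)
    (horacle : ∀ t : ℕ, 1 ≤ t → ∀ u ∈ Ω,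
      ⟪f' (z (t - 1)), v t⟫ ≤ ⟪f' (z (t - 1)), u⟫)
    (hw : ∀ t : ℕ, 1 ≤ t →
      w t = (1 - 2 / ((t : ℝ) + 1)) • w (t - 1) + (2 / ((t : ℝ) + 1)) • v t)
    {c : ℝ} (hc : 0 < c) (hgrad : ∀ t : ℕ, c ≤ ‖f' (z t)‖) :
    ∀ wstar ∈ Ω, ∀ t : ℕ, 1 ≤ t →
      f (w t) - f wstar ≤
        2 * L / ((t : ℝ) * ((t : ℝ) + 1)) * D ^ 2 * (1 + 36 * L ^ 2 / (α ^ 2 * c ^ 2)) := by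
  intro wstar hwstar t ht
  have hz' (n : ℕ) : z n = (1 - stepSize (n + 1)) • w n + stepSize (n + 1) • v n :=
    hz (n + 1) (Nat.le_add_left 1 n)
  have hw' (n : ℕ) : w (n + 1) = (1 - stepSize (n + 1)) • w n + stepSize (n + 1) • v (n + 1) :=
    hw (n + 1) (Nat.le_add_left 1 n)
  have hmin (n : ℕ) : IsMinOn (fun u => ⟪f' (z n), u⟫) Ω (v (n + 1)) :=
    horacle (n + 1) (Nat.le_add_left 1 n)
  have hv : ∀ n, v n ∈ Ω
    | 0 => hv0
    | n + 1 => hvmem (n + 1) (Nat.le_add_left 1 n)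
  have hwΩ := averaging_mem (hΩ.convex hα.le) hv hw0 hw'
  have hstep (n : ℕ) := (hw' n).symm ▸ hconv.sub_le_of_averaging_step hsmooth
    (stepSize_pos _).le (stepSize_succ_le_one n) ((hz' n) ▸ isMinOn_iff.1 (hmin n) wstar hwstar)
  have hdv (n : ℕ) : ‖v (n + 2) - v (n + 1)‖ ≤ 6 * L * D / (α * c) / ((n : ℝ) + 2) :=
    calc ‖v (n + 2) - v (n + 1)‖ ≤ ‖f' (z (n + 1)) - f' (z n)‖ / (α * c) := by
          rw [le_div_iff₀ (by positivity), mul_comm]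
          exact hΩ.mul_norm_sub_le_norm_sub_of_le_norm hα.le (hgrad _) (hgrad _) (hv _) (hv _)
            (hmin (n + 1)) (hmin n)
      _ ≤ L * (6 * D / ((n : ℝ) + 2)) / (α * c) := by
          gcongr
          exact (hconv.norm_sub_le_of_smooth hL hsmooth _ _).trans <| by
            gcongr; exact norm_succ_sub_le_of_averaging hdiam hv hwΩ hz' hw' n
      _ = 6 * L * D / (α * c) / ((n : ℝ) + 2) := by ring
  have hrate := mul_mul_le_of_step (e := fun n => f (w n) - f wstar)
    (ρ := fun n => ‖v (n + 1) - v n‖ ^ 2) hL.le (fun n => sq_nonneg _)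
    (pow_le_pow_left₀ (norm_nonneg _) (hdiam _ (hv 1) _ (hv 0)) 2)
    (fun n => by rw [← div_pow]; exact pow_le_pow_left₀ (norm_nonneg _) (hdv n) 2) hstep t
  have ht' : (0 : ℝ) < t := by exact_mod_cast ht
  calc f (w t) - f wstar ≤ 2 * L * (D ^ 2 + (6 * L * D / (α * c)) ^ 2) / (t * (t + 1)) := by
        rw [le_div_iff₀ (by positivity)]; linarith
    _ = 2 * L / ((t : ℝ) * (t + 1)) * D ^ 2 * (1 + 36 * L ^ 2 / (α ^ 2 * c ^ 2)) := by
        field_simp; ring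

/-- `O(1/t²)` rate for Primal Averaging with the most-recent-gradient oracle (option (B))
over a compact `α`-strongly convex set of diameter at most `D`, when gradient norms along
the accelerating sequence are bounded below by `c > 0`:
`f(w_t) − f(w*) ≤ (2L/(t(t+1)))·D²·(1 + 36L²/(α²c²))`. -/
theorem primal_averaging_optionB_O_inv_t_sq
    {E : Type*} [NormedAddCommGroup E] [InnerProductSpace ℝ E]
    {α : ℝ} (hα : 0 < α) {Ω : Set E} (hne : Ω.Nonempty) (hcomp : IsCompact Ω)
    (hΩ : StronglyConvexSet α Ω)
    {D : ℝ} (hdiam : ∀ u ∈ Ω, ∀ v ∈ Ω, ‖u - v‖ ≤ D)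
    (f : E → ℝ) (f' : E → E) {L : ℝ} (hL : 0 < L)
    (hconv : ConvexOn ℝ Set.univ f)
    (hdiff : ∀ x : E, HasFDerivAt f (innerSL ℝ (f' x)) x)
    (hsmooth : ∀ x y : E, |f x - f y - ⟪f' y, x - y⟫| ≤ L / 2 * ‖x - y‖ ^ 2)
    (w v z : ℕ → E)
    (hw0 : w 0 = v 0) (hv0 : v 0 ∈ Ω)
    (hz : ∀ t : ℕ, 1 ≤ t →
      z (t - 1) = (1 - 2 / ((t : ℝ) + 1)) • w (t - 1) + (2 / ((t : ℝ) + 1)) • v (t - 1))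
    (hvmem : ∀ t : ℕ, 1 ≤ t → v t ∈ Ω)
    (horacle : ∀ t : ℕ, 1 ≤ t → ∀ u ∈ Ω,
      ⟪f' (z (t - 1)), v t⟫ ≤ ⟪f' (z (t - 1)), u⟫)
    (hw : ∀ t : ℕ, 1 ≤ t →
      w t = (1 - 2 / ((t : ℝ) + 1)) • w (t - 1) + (2 / ((t : ℝ) + 1)) • v t)
    {c : ℝ} (hc : 0 < c) (hgrad : ∀ t : ℕ, c ≤ ‖f' (z t)‖) :
    ∀ wstar ∈ Ω, ∀ t : ℕ, 1 ≤ t →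
      f (w t) - f wstar ≤
        2 * L / ((t : ℝ) * ((t : ℝ) + 1)) * D ^ 2 * (1 + 36 * L ^ 2 / (α ^ 2 * c ^ 2)) :=
  primal_averaging_optionB_O_inv_t_sq_general hα hΩ hdiam f f' hL hconv hsmooth w v z hw0 hv0 hz
    hvmem horacle hw hc hgrad
end

section
/- Let E be a real inner product space, α > 0, and let Ω ⊆ E be a nonempty compact α-strongly convex set. Let f : E → ℝ be differentiable with gradient ∇f and L-smooth (L > 0). Let w* ∈ Ω satisfy f(w*) ≤ f(w) for all w ∈ Ω, and let ε, κ, θ > 0. Assume that for every w ∈ Ω with f(w) − f(w*) > ε: (i) ‖∇f(w)‖ ≥ θε, and (ii) ⟨∇f(w), y − w⟩ ≤ 0 for every y ∈ E with ‖y − w*‖ ≤ ε/κ. Consider Frank–Wolfe with exact line search: w_1 ∈ Ω and, for each t ≥ 1, v_t ∈ Ω with ⟨∇f(w_t), v_t⟩ ≤ ⟨∇f(w_t), u⟩ for all u ∈ Ω, and w_{t+1} ∈ Ω with f(w_{t+1}) ≤ f(w_t + γ(v_t − w_t)) for all γ ∈ [0,1]. If T ≥ 1 is such that f(w_s) − f(w*)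 > ε for all s = 1, …, T, then T ≤ (f(w_1) − f(w*)) / min( θε²/(2κ), α·θ²·ε³/(8κL) ). -/
/-!
Let `g = ∇f(w_t)` and let `G = ⟪g, w_t - v_t⟫` be the Frank–Wolfe gap. Strict local
quasi-convexity at the point `w* + (ε/κ) g/‖g‖` of the ball around `w*`, together with the
oracle tested against `w*`, gives `G ≥ (ε/κ)‖g‖ ≥ θε²/κ`. Testing the oracle against the
midpoint of `v_t, w_t` pushed by `(α/8)‖v_t - w_t‖²` in the direction `-g/‖g‖`, which strong
convexity keeps in `Ω`, gives `G ≥ (α/4)‖v_t - w_t‖²‖g‖`. Smoothness bounds the line-search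
value by the best quadratic `f(w_t) - γG + (L/2)γ²‖v_t - w_t‖²` over `γ ∈ [0,1]`, so each step
decreases `f` by at least `min(G/2, α‖g‖G/(8L))`, which is at least the constant in the
denominator. Summing over the first `T` steps and using `f(w_{T+1}) ≥ f(w*)` gives the bound.
-/

open RealInnerProductSpace Set

/-- The step-size choice behind the Frank–Wolfe descent bound: `γ = 1` if `L D² ≤ G`,
otherwise `γ = G / (L D²)`. -/
lemma exists_mem_Icc_min_le_mul_sub {G D L β : ℝ} (hG : 0 ≤ G) (hL : 0 < L)
    (hβ : β * D ^ 2 ≤ G) :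
    ∃ γ ∈ Icc (0 : ℝ) 1, min (G / 2) (β * G / (2 * L)) ≤ γ * G - L / 2 * γ ^ 2 * D ^ 2 := by
  rcases le_or_gt (L * D ^ 2) G with hLD | hLD
  · exact ⟨1, ⟨zero_le_one, le_rfl⟩, (min_le_left _ _).trans (by linarith)⟩
  · have hLD₀ : 0 < L * D ^ 2 := hG.trans_lt hLD
    refine ⟨G / (L * D ^ 2), ⟨by positivity, (div_le_one hLD₀).2 hLD.le⟩,
      (min_le_right _ _).trans ?_⟩
    have hval : G / (L * D ^ 2) * G - L / 2 * (G / (L * D ^ 2)) ^ 2 * D ^ 2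
        = G * G / (2 * (L * D ^ 2)) := by
      field_simp
      ring
    rw [hval, div_le_div_iff₀ (by positivity) (by positivity)]
    nlinarith [mul_le_mul_of_nonneg_left hβ (mul_nonneg hG hL.le)]

section InnerProductSpace

variable {E : Type*} [NormedAddCommGroup E] [InnerProductSpace ℝ E]

lemma real_inner_inv_norm_smul_self (g : E) : ⟪g, ‖g‖⁻¹ • g⟫ = ‖g‖ := by
  rw [real_inner_smul_right, real_inner_self_eq_norm_sq, sq, inv_mul_eq_div, mul_self_div_self]

lemma norm_inv_norm_smul_le_one (g : E) : ‖‖g‖⁻¹ • g‖ ≤ 1 := by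
  rcases eq_or_ne g 0 with rfl | hg
  · simp
  · exact (norm_smul_inv_norm hg).le

lemma mul_norm_le_inner_sub_of_forall_norm_sub_le {g x c : E} {r : ℝ} (hr : 0 ≤ r)
    (h : ∀ y : E, ‖y - c‖ ≤ r → ⟪g, y - x⟫ ≤ 0) : r * ‖g‖ ≤ ⟪g, x - c⟫ := by
  have hy : ‖(c + r • ‖g‖⁻¹ • g) - c‖ ≤ r := by
    rw [add_sub_cancel_left, norm_smul, Real.norm_of_nonneg hr]
    exact mul_le_of_le_one_right hr (norm_inv_norm_smul_le_one g)
  have := h _ hy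
  rw [add_sub_right_comm, inner_add_right, real_inner_smul_right,
    real_inner_inv_norm_smul_self, ← neg_sub x c, inner_neg_right] at this
  linarith

lemma StronglyConvexSet.mul_sq_norm_mul_norm_le_inner {α : ℝ} {Ω : Set E}
    (hΩ : StronglyConvexSet α Ω) (hα : 0 ≤ α) {g u v : E} (hu : u ∈ Ω) (hv : v ∈ Ω)
    (hmin : ∀ z ∈ Ω, ⟪g, v⟫ ≤ ⟪g, z⟫) :
    α / 4 * ‖v - u‖ ^ 2 * ‖g‖ ≤ ⟪g, u - v⟫ := by
  set δ := α / 8 * ‖v - u‖ ^ 2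
  have hδ : 0 ≤ δ := by positivity
  have hmem : (1 / 2 : ℝ) • v + (1 - 1 / 2 : ℝ) • u - δ • ‖g‖⁻¹ • g ∈ Ω := by
    refine hΩ v hv u hu (1 / 2) ⟨by norm_num, by norm_num⟩ _ ?_
    rw [sub_sub_cancel_left, norm_neg, norm_smul, Real.norm_of_nonneg hδ]
    calc δ * ‖‖g‖⁻¹ • g‖ ≤ δ := mul_le_of_le_one_right hδ (norm_inv_norm_smul_le_one g)
      _ = 1 / 2 * (1 - 1 / 2) * (α / 2) * ‖v - u‖ ^ 2 := by ring
  have := hmin _ hmem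
  rw [inner_sub_right, inner_add_right, real_inner_smul_right, real_inner_smul_right,
    real_inner_smul_right, real_inner_inv_norm_smul_self] at this
  have hδg : δ * ‖g‖ = α / 8 * ‖v - u‖ ^ 2 * ‖g‖ := rfl
  rw [inner_sub_right]
  linarith

lemma le_sub_mul_inner_add_of_forall_le_segment {f : E → ℝ} {g w v w' : E} {L : ℝ}
    (hsmooth : ∀ y : E, f y ≤ f w + ⟪g, y - w⟫ + L / 2 * ‖y - w‖ ^ 2)
    (hls : ∀ γ ∈ Icc (0 : ℝ) 1, f w' ≤ f (w + γ • (v - w))) {γ : ℝ} (hγ : γ ∈ Icc (0 : ℝ) 1) :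
    f w' ≤ f w - γ * ⟪g, w - v⟫ + L / 2 * γ ^ 2 * ‖v - w‖ ^ 2 := by
  have h := hsmooth (w + γ • (v - w))
  have hinner : ⟪g, v - w⟫ = -⟪g, w - v⟫ := by rw [← inner_neg_right, neg_sub]
  rw [add_sub_cancel_left, real_inner_smul_right, hinner, norm_smul, Real.norm_of_nonneg hγ.1,
    mul_pow] at h
  linarith [hls γ hγ]

theorem frankWolfe_le_sub_min {α L : ℝ} {Ω : Set E} (hΩ : StronglyConvexSet α Ω) (hα : 0 ≤ α)
    (hL : 0 < L) {f : E → ℝ} {g w v w' : E} (hw : w ∈ Ω) (hv : v ∈ Ω)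
    (horacle : ∀ u ∈ Ω, ⟪g, v⟫ ≤ ⟪g, u⟫)
    (hsmooth : ∀ y : E, f y ≤ f w + ⟪g, y - w⟫ + L / 2 * ‖y - w‖ ^ 2)
    (hls : ∀ γ ∈ Icc (0 : ℝ) 1, f w' ≤ f (w + γ • (v - w))) :
    f w' ≤ f w - min (⟪g, w - v⟫ / 2) (α * ‖g‖ / 4 * ⟪g, w - v⟫ / (2 * L)) := by
  have hgap : 0 ≤ ⟪g, w - v⟫ := by
    rw [inner_sub_right, sub_nonneg]
    exact horacle w hw
  have hcurv : α * ‖g‖ / 4 * ‖v - w‖ ^ 2 ≤ ⟪g, w - v⟫ := by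
    have := hΩ.mul_sq_norm_mul_norm_le_inner hα hw hv horacle
    linarith
  obtain ⟨γ, hγ, hdec⟩ := exists_mem_Icc_min_le_mul_sub hgap hL hcurv
  linarith [le_sub_mul_inner_add_of_forall_le_segment hsmooth hls hγ]

theorem frankWolfe_add_min_le_of_slqc {α L ε κ θ : ℝ} {Ω : Set E}
    (hΩ : StronglyConvexSet α Ω) (hα : 0 ≤ α) (hL : 0 < L) (hε : 0 ≤ ε) (hκ : 0 ≤ κ)
    (hθ : 0 ≤ θ) {f : E → ℝ} {g w v w' wstar : E} (hw : w ∈ Ω) (hv : v ∈ Ω) (hwstar : wstar ∈ Ω)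
    (horacle : ∀ u ∈ Ω, ⟪g, v⟫ ≤ ⟪g, u⟫)
    (hsmooth : ∀ y : E, f y ≤ f w + ⟪g, y - w⟫ + L / 2 * ‖y - w‖ ^ 2)
    (hls : ∀ γ ∈ Icc (0 : ℝ) 1, f w' ≤ f (w + γ • (v - w))) (hgrad : θ * ε ≤ ‖g‖)
    (hslqc : ∀ y : E, ‖y - wstar‖ ≤ ε / κ → ⟪g, y - w⟫ ≤ 0) :
    f w' + min (θ * ε ^ 2 / (2 * κ)) (α * θ ^ 2 * ε ^ 3 / (8 * κ * L)) ≤ f w := by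
  have hgap : θ * ε ^ 2 / κ ≤ ⟪g, w - v⟫ := by
    have hball := mul_norm_le_inner_sub_of_forall_norm_sub_le (by positivity) hslqc
    have hv_le : ⟪g, v⟫ ≤ ⟪g, wstar⟫ := horacle wstar hwstar
    rw [inner_sub_right] at hball ⊢
    calc θ * ε ^ 2 / κ = ε / κ * (θ * ε) := by ring
      _ ≤ ε / κ * ‖g‖ := by gcongr
      _ ≤ _ := by linarith
  have hmin_le : min (θ * ε ^ 2 / (2 * κ)) (α * θ ^ 2 * ε ^ 3 / (8 * κ * L)) ≤
      min (⟪g, w - v⟫ / 2) (α * ‖g‖ / 4 * ⟪g, w - v⟫ / (2 * L)) := by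
    gcongr min ?_ ?_
    · calc θ * ε ^ 2 / (2 * κ) = θ * ε ^ 2 / κ / 2 := by ring
        _ ≤ _ := by gcongr
    · calc α * θ ^ 2 * ε ^ 3 / (8 * κ * L)
          = α * (θ * ε) / 4 * (θ * ε ^ 2 / κ) / (2 * L) := by ring
        _ ≤ _ := by gcongr
  linarith [frankWolfe_le_sub_min hΩ hα hL hw hv horacle hsmooth hls]

end InnerProductSpace

lemma add_mul_le_of_forall_add_le {a : ℕ → ℝ} {c : ℝ} {T : ℕ}
    (h : ∀ s : ℕ, 1 ≤ s → s ≤ T → a (s + 1) + c ≤ a s) : a (T + 1) + T * c ≤ a 1 := by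
  induction T with
  | zero => simp
  | succ n ih =>
    have hn := h (n + 1) (Nat.le_add_left 1 n) le_rfl
    have := ih fun s hs hsn => h s hs (hsn.trans n.le_succ)
    push_cast
    linarith

theorem frank_wolfe_slqc_iteration_bound_general
    {E : Type*} [NormedAddCommGroup E] [InnerProductSpace ℝ E]
    {α : ℝ} (hα : 0 < α) {Ω : Set E}
    (hΩ : StronglyConvexSet α Ω)
    (f : E → ℝ) (f' : E → E) {L : ℝ} (hL : 0 < L)
    (hsmooth : ∀ x y : E, |f x - f y - ⟪f' y, x - y⟫| ≤ L / 2 * ‖x - y‖ ^ 2)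
    {wstar : E} (hwstar : wstar ∈ Ω) (hmin : ∀ x ∈ Ω, f wstar ≤ f x)
    {ε κ θ : ℝ} (hε : 0 < ε) (hκ : 0 < κ) (hθ : 0 < θ)
    (hgrad : ∀ x ∈ Ω, ε < f x - f wstar → θ * ε ≤ ‖f' x‖)
    (hslqc : ∀ x ∈ Ω, ε < f x - f wstar →
      ∀ y : E, ‖y - wstar‖ ≤ ε / κ → ⟪f' x, y - x⟫ ≤ 0)
    (w v : ℕ → E)
    (hwmem : ∀ s : ℕ, 1 ≤ s → w s ∈ Ω)
    (hvmem : ∀ s : ℕ, 1 ≤ s → v s ∈ Ω)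
    (horacle : ∀ s : ℕ, 1 ≤ s → ∀ u ∈ Ω, ⟪f' (w s), v s⟫ ≤ ⟪f' (w s), u⟫)
    (hls : ∀ s : ℕ, 1 ≤ s → ∀ γ ∈ Set.Icc (0 : ℝ) 1,
      f (w (s + 1)) ≤ f (w s + γ • (v s - w s)))
    {T : ℕ}
    (hfar : ∀ s : ℕ, 1 ≤ s → s ≤ T → ε < f (w s) - f wstar) :
    (T : ℝ) ≤ (f (w 1) - f wstar) /
      min (θ * ε ^ 2 / (2 * κ)) (α * θ ^ 2 * ε ^ 3 / (8 * κ * L)) := by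
  have hstep : ∀ s : ℕ, 1 ≤ s → s ≤ T → f (w (s + 1)) +
      min (θ * ε ^ 2 / (2 * κ)) (α * θ ^ 2 * ε ^ 3 / (8 * κ * L)) ≤ f (w s) := fun s hs hsT =>
    frankWolfe_add_min_le_of_slqc hΩ hα.le hL hε.le hκ.le hθ.le (hwmem s hs) (hvmem s hs) hwstar
      (horacle s hs) (fun y => by linarith [(abs_le.mp (hsmooth y (w s))).2]) (hls s hs)
      (hgrad _ (hwmem s hs) (hfar s hs hsT)) (hslqc _ (hwmem s hs) (hfar s hs hsT))
  have hlast := hmin _ (hwmem (T + 1) (by omega))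
  rw [le_div_iff₀ (by positivity)]
  linarith [add_mul_le_of_forall_add_le (a := fun s => f (w s)) hstep]

/-- Theorem 3 of the paper: for a smooth strictly-locally-quasi-convex objective (with a
gradient-norm lower bound) over a compact strongly convex set, Frank–Wolfe with exact line
search stays outside the `ε`-neighborhood of the global minimum for at most
`(f(w₁) − f(w*)) / min(θε²/(2κ), αθ²ε³/(8κL))` iterations. -/
theorem frank_wolfe_slqc_iteration_bound
    {E : Type*} [NormedAddCommGroup E] [InnerProductSpace ℝ E]
    {α : ℝ} (hα : 0 < α) {Ω : Set E} (hne : Ω.Nonempty) (hcomp : IsCompact Ω)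
    (hΩ : StronglyConvexSet α Ω)
    (f : E → ℝ) (f' : E → E) {L : ℝ} (hL : 0 < L)
    (hdiff : ∀ x : E, HasFDerivAt f (innerSL ℝ (f' x)) x)
    (hsmooth : ∀ x y : E, |f x - f y - ⟪f' y, x - y⟫| ≤ L / 2 * ‖x - y‖ ^ 2)
    {wstar : E} (hwstar : wstar ∈ Ω) (hmin : ∀ x ∈ Ω, f wstar ≤ f x)
    {ε κ θ : ℝ} (hε : 0 < ε) (hκ : 0 < κ) (hθ : 0 < θ)
    (hgrad : ∀ x ∈ Ω, ε < f x - f wstar → θ * ε ≤ ‖f' x‖)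
    (hslqc : ∀ x ∈ Ω, ε < f x - f wstar →
      ∀ y : E, ‖y - wstar‖ ≤ ε / κ → ⟪f' x, y - x⟫ ≤ 0)
    (w v : ℕ → E)
    (hwmem : ∀ s : ℕ, 1 ≤ s → w s ∈ Ω)
    (hvmem : ∀ s : ℕ, 1 ≤ s → v s ∈ Ω)
    (horacle : ∀ s : ℕ, 1 ≤ s → ∀ u ∈ Ω, ⟪f' (w s), v s⟫ ≤ ⟪f' (w s), u⟫)
    (hls : ∀ s : ℕ, 1 ≤ s → ∀ γ ∈ Set.Icc (0 : ℝ) 1,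
      f (w (s + 1)) ≤ f (w s + γ • (v s - w s)))
    {T : ℕ} (hT : 1 ≤ T)
    (hfar : ∀ s : ℕ, 1 ≤ s → s ≤ T → ε < f (w s) - f wstar) :
    (T : ℝ) ≤ (f (w 1) - f wstar) /
      min (θ * ε ^ 2 / (2 * κ)) (α * θ ^ 2 * ε ^ 3 / (8 * κ * L)) :=
  frank_wolfe_slqc_iteration_bound_general hα hΩ f f' hL hsmooth hwstar hmin hε hκ hθ hgrad hslqc w
    v hwmem hvmem horacle hls hfar
end

section
/- Let E be a real inner product space, α > 0, and let Ω ⊆ E be a nonempty compact α-strongly convex set. Let f : E → ℝ be differentiable with gradient ∇f and L-smooth (L > 0). Let w ∈ Ω, let v ∈ Ω satisfy ⟨∇f(w), v⟩ ≤ ⟨∇f(w), u⟩ for all u ∈ Ω, and let k = sup_{u ∈ Ω} ⟨u − w, −∇f(w)⟩ be the Frank–Wolfe gap at w. Then there exists γ ∈ [0,1] such that f(w + γ(v − w)) ≤ f(w) − min( 1/2, α‖∇f(w)‖/(8L) )·k. -/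
open RealInnerProductSpace

/-!
Strong convexity puts a ball of radius `α‖v − w‖²/8` around the midpoint of `v` and `w`
inside `Ω`. Since `v` minimises `⟪∇f(w), ·⟫` on `Ω`, comparing with the point of that ball
furthest in the direction `−∇f(w)` gives `α‖∇f(w)‖‖v − w‖² ≤ 4k`, where `k = ⟪∇f(w), w − v⟫`
is the Frank–Wolfe gap. With `m = min(1/2, α‖∇f(w)‖/(8L))` this reads `2mL‖v − w‖² ≤ k`, so
the step `γ = 2m` in the quadratic upper bound from `L`-smoothness decreases `f` by at least
`2mk − 2m²L‖v − w‖² ≥ mk`.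
-/

section InnerProductSpace

variable {E : Type*} [NormedAddCommGroup E] [InnerProductSpace ℝ E]

theorem StronglyConvexSet.closedBall_midpoint_subset {α : ℝ} {Ω : Set E}
    (hΩ : StronglyConvexSet α Ω) {u v : E} (hu : u ∈ Ω) (hv : v ∈ Ω) :
    Metric.closedBall (midpoint ℝ u v) (α / 8 * ‖u - v‖ ^ 2) ⊆ Ω := by
  intro y hy
  refine hΩ u hu v hv (1 / 2) ⟨by norm_num, by norm_num⟩ y ?_
  have hmid : (1 / 2 : ℝ) • u + (1 - 1 / 2 : ℝ) • v = midpoint ℝ u v := by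
    rw [midpoint_eq_smul_add, smul_add]
    norm_num
  rw [hmid, ← dist_eq_norm]
  linarith [Metric.mem_closedBall.mp hy]

theorem inner_add_mul_norm_le_of_closedBall_subset {Ω : Set E} {g v c : E} {r : ℝ}
    (hr : 0 ≤ r) (hball : Metric.closedBall c r ⊆ Ω) (hmin : ∀ u ∈ Ω, ⟪g, v⟫ ≤ ⟪g, u⟫) :
    ⟪g, v⟫ + r * ‖g‖ ≤ ⟪g, c⟫ := by
  rcases eq_or_ne g 0 with rfl | hg
  · simp
  have hg' : 0 < ‖g‖ := norm_pos_iff.mpr hg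
  have hmem : c - (r / ‖g‖) • g ∈ Ω := by
    refine hball ?_
    rw [Metric.mem_closedBall, dist_eq_norm, sub_sub_cancel_left, norm_neg, norm_smul,
      Real.norm_of_nonneg (by positivity), div_mul_cancel₀ _ hg'.ne']
  have hinner : ⟪g, c - (r / ‖g‖) • g⟫ = ⟪g, c⟫ - r * ‖g‖ := by
    rw [inner_sub_right, inner_smul_right, real_inner_self_eq_norm_sq]
    field_simp
  linarith [hmin _ hmem]

theorem StronglyConvexSet.mul_norm_mul_sq_le_inner {α : ℝ} {Ω : Set E}
    (hα : 0 ≤ α) (hΩ : StronglyConvexSet α Ω) {g v w : E} (hv : v ∈ Ω) (hw : w ∈ Ω)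
    (hmin : ∀ u ∈ Ω, ⟪g, v⟫ ≤ ⟪g, u⟫) :
    α * ‖g‖ * ‖v - w‖ ^ 2 ≤ 4 * ⟪g, w - v⟫ := by
  have h := inner_add_mul_norm_le_of_closedBall_subset (by positivity)
    (hΩ.closedBall_midpoint_subset hv hw) hmin
  rw [midpoint_eq_smul_add, inner_smul_right, inner_add_right] at h
  rw [inner_sub_right]
  norm_num at h
  linarith

theorem sSup_image_inner_sub_neg_eq {Ω : Set E} {g v w : E} (hv : v ∈ Ω)
    (hmin : ∀ u ∈ Ω, ⟪g, v⟫ ≤ ⟪g, u⟫) :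
    sSup ((fun u => ⟪u - w, -g⟫) '' Ω) = ⟪g, w - v⟫ := by
  have hval : ∀ u, ⟪u - w, -g⟫ = ⟪g, w - u⟫ := fun u => by
    rw [inner_neg_right, real_inner_comm, ← inner_neg_right, neg_sub]
  refine IsGreatest.csSup_eq ⟨⟨v, hv, hval v⟩, ?_⟩
  rintro _ ⟨u, hu, rfl⟩
  change ⟪u - w, -g⟫ ≤ _
  rw [hval, inner_sub_right, inner_sub_right]
  linarith [hmin u hu]

theorem le_add_inner_add_sq_of_abs_sub_inner_le {f : E → ℝ} {f' : E → E} {L : ℝ}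
    (hsmooth : ∀ x y : E, |f x - f y - ⟪f' y, x - y⟫| ≤ L / 2 * ‖x - y‖ ^ 2)
    (w d : E) (γ : ℝ) :
    f (w + γ • d) ≤ f w + γ * ⟪f' w, d⟫ + L / 2 * γ ^ 2 * ‖d‖ ^ 2 := by
  have h := (abs_le.mp (hsmooth (w + γ • d) w)).2
  rw [add_sub_cancel_left, inner_smul_right, norm_smul, mul_pow, Real.norm_eq_abs, sq_abs] at h
  linarith

end InnerProductSpace

theorem frank_wolfe_nonconvex_decrease_general
    {E : Type*} [NormedAddCommGroup E] [InnerProductSpace ℝ E]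
    {α : ℝ} (hα : 0 < α) {Ω : Set E}
    (hΩ : StronglyConvexSet α Ω)
    (f : E → ℝ) (f' : E → E) {L : ℝ} (hL : 0 < L)
    (hsmooth : ∀ x y : E, |f x - f y - ⟪f' y, x - y⟫| ≤ L / 2 * ‖x - y‖ ^ 2)
    {w : E} (hw : w ∈ Ω)
    {v : E} (hv : v ∈ Ω) (horacle : ∀ u ∈ Ω, ⟪f' w, v⟫ ≤ ⟪f' w, u⟫)
    {k : ℝ} (hk : k = sSup ((fun u => ⟪u - w, -(f' w)⟫) '' Ω)) :
    ∃ γ ∈ Set.Icc (0 : ℝ) 1,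
      f (w + γ • (v - w)) ≤ f w - min (1 / 2) (α * ‖f' w‖ / (8 * L)) * k := by
  rw [sSup_image_inner_sub_neg_eq hv horacle] at hk
  have hkey := hΩ.mul_norm_mul_sq_le_inner hα.le hv hw horacle
  set m := min (1 / 2) (α * ‖f' w‖ / (8 * L))
  have hm : 2 * m * (L * ‖v - w‖ ^ 2) ≤ k := by
    have h8 : m * (8 * L) ≤ α * ‖f' w‖ := (le_div_iff₀ (by positivity)).mp (min_le_right _ _)
    nlinarith [mul_le_mul_of_nonneg_right h8 (sq_nonneg ‖v - w‖)]
  have hm0 : 0 ≤ m := by positivity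
  have hm_half : m ≤ 1 / 2 := min_le_left _ _
  refine ⟨2 * m, ⟨by positivity, by linarith⟩, ?_⟩
  calc f (w + (2 * m) • (v - w))
      ≤ f w + 2 * m * ⟪f' w, v - w⟫ + L / 2 * (2 * m) ^ 2 * ‖v - w‖ ^ 2 :=
        le_add_inner_add_sq_of_abs_sub_inner_le hsmooth w (v - w) (2 * m)
    _ ≤ f w - m * k := by
        have hinner : ⟪f' w, v - w⟫ = -k := by rw [hk, ← inner_neg_right, neg_sub]
        rw [hinner]
        nlinarith

/-- Per-iteration decrease of Frank–Wolfe with exact line search for (possibly non-convex)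
smooth objectives over strongly convex sets: with `v` the oracle output at `w` and `k` the
Frank–Wolfe gap at `w`, there exists `γ ∈ [0,1]` with
`f(w + γ(v − w)) ≤ f(w) − min(1/2, α‖∇f(w)‖/(8L))·k`. -/
theorem frank_wolfe_nonconvex_decrease
    {E : Type*} [NormedAddCommGroup E] [InnerProductSpace ℝ E]
    {α : ℝ} (hα : 0 < α) {Ω : Set E} (hne : Ω.Nonempty) (hcomp : IsCompact Ω)
    (hΩ : StronglyConvexSet α Ω)
    (f : E → ℝ) (f' : E → E) {L : ℝ} (hL : 0 < L)
    (hdiff : ∀ x : E, HasFDerivAt f (innerSL ℝ (f' x)) x)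
    (hsmooth : ∀ x y : E, |f x - f y - ⟪f' y, x - y⟫| ≤ L / 2 * ‖x - y‖ ^ 2)
    {w : E} (hw : w ∈ Ω)
    {v : E} (hv : v ∈ Ω) (horacle : ∀ u ∈ Ω, ⟪f' w, v⟫ ≤ ⟪f' w, u⟫)
    {k : ℝ} (hk : k = sSup ((fun u => ⟪u - w, -(f' w)⟫) '' Ω)) :
    ∃ γ ∈ Set.Icc (0 : ℝ) 1,
      f (w + γ • (v - w)) ≤ f w - min (1 / 2) (α * ‖f' w‖ / (8 * L)) * k :=
  frank_wolfe_nonconvex_decrease_general hα hΩ f f' hL hsmooth hw hv horacle hk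
end
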